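/- arXiv:1211.5755 — 3 statements merged into one kernel-verified Lean document; each statement's English description precedes it below -/
import Mathlib

section
/- Let P ⊂ ℝ^N be an integral convex polytope of dimension d, and let n ≥ μ_hole(P), where μ_hole(P) is the maximal degree of an element of Box(P) (the set of holes of P), or 1 if Box(P) is empty. Then the dilated polytope nP possesses the integer decomposition property. In particular μ_idp(P) ≤ μ_hole(P). -/
open scoped BigOperators Pointwise

/-- Points of `ℝ^N`. -/
abbrev Pt (N : ℕ) := Fin N → ℝ

/-- A point has integer coordinates. -/
def IsLat {N : ℕ} (x : Pt N) : Prop := ∀ i, ∃ z : ℤ, x i = (z : ℝ)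

/-- Lattice points of a set. -/
def latPts {N : ℕ} (P : Set (Pt N)) : Set (Pt N) := {x ∈ P | IsLat x}

/-- The dilated polytope `kP`. -/
def dil {N : ℕ} (k : ℕ) (P : Set (Pt N)) : Set (Pt N) := (k : ℝ) • P

/-- `α` is a sum of `k` lattice points of `P`. -/
def DecomposesIn {N : ℕ} (P : Set (Pt N)) (k : ℕ) (α : Pt N) : Prop :=
  ∃ f : Fin k → Pt N, (∀ i, f i ∈ latPts P) ∧ α = ∑ i, f i

/-- The integer decomposition property. -/
def HasIDP {N : ℕ} (P : Set (Pt N)) : Prop :=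
  ∀ k : ℕ, 0 < k → ∀ α ∈ latPts (dil k P), DecomposesIn P k α

/-- Very ampleness: decomposition holds for all sufficiently large `k`. -/
def VeryAmple {N : ℕ} (P : Set (Pt N)) : Prop :=
  ∃ k₀ : ℕ, ∀ k, k₀ ≤ k → ∀ α ∈ latPts (dil k P), DecomposesIn P k α

/-- An integral convex polytope: the convex hull of finitely many lattice points
(which include all its vertices). -/
def IsIntegralPolytope {N : ℕ} (P : Set (Pt N)) : Prop :=
  ∃ V : Finset (Pt N), (∀ v ∈ V, IsLat v) ∧ P = convexHull ℝ (V : Set (Pt N))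

/-- Dimension of a polytope: the rank of the direction of its affine span. -/
noncomputable def polyDim {N : ℕ} (P : Set (Pt N)) : ℕ :=
  Module.finrank ℝ (affineSpan ℝ P).direction

/-- Lattice points of the cone `C(P) ⊂ ℝ^{N+1}` generated by `P̃ = P × {1}`;
a point of `ℝ^{N+1}` is represented as a pair `(x, deg)`. -/
def coneLat {N : ℕ} (P : Set (Pt N)) : Set (Pt N × ℝ) :=
  {p | (∃ (m : ℕ) (c : Fin m → ℝ) (w : Fin m → Pt N),
        (∀ i, 0 ≤ c i ∧ w i ∈ P) ∧ p.1 = ∑ i, c i • w i ∧ p.2 = ∑ i, c i)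
    ∧ IsLat p.1 ∧ ∃ z : ℤ, p.2 = (z : ℝ)}

/-- The monoid `ℤ_{≥0}(P̃ ∩ ℤ^{N+1})` generated by the degree-one lattice points of the cone. -/
def genMonoid {N : ℕ} (P : Set (Pt N)) : Set (Pt N × ℝ) :=
  {p | ∃ (m : ℕ) (f : Fin m → Pt N), (∀ i, f i ∈ latPts P) ∧
        p.1 = ∑ i, f i ∧ p.2 = (m : ℝ)}

/-- `H` is the minimal Hilbert basis of the cone `C(P)`. -/
def IsMinHilbertBasis {N : ℕ} (P : Set (Pt N)) (H : Set (Pt N × ℝ)) : Prop :=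
  (H.Finite ∧ H ⊆ coneLat P ∧
      coneLat P ⊆ (AddSubmonoid.closure H : Set (Pt N × ℝ))) ∧
  ∀ H' : Set (Pt N × ℝ),
    (H'.Finite ∧ H' ⊆ coneLat P ∧
      coneLat P ⊆ (AddSubmonoid.closure H' : Set (Pt N × ℝ))) → H ⊆ H'

/-- `v` lists the vertices of an empty `d`-simplex contained in `P`. -/
def EmptySimplexIn {N : ℕ} (P : Set (Pt N)) (d : ℕ) (v : Fin (d+1) → Pt N) : Prop :=
  (∀ i, v i ∈ latPts P) ∧ AffineIndependent ℝ v ∧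
    ∀ x ∈ convexHull ℝ (Set.range v), IsLat x → x ∈ Set.range v

/-- `Box(S)` of a simplex with vertex list `v`: lattice points
`Σ rᵢ (vᵢ, 1)` with `0 ≤ rᵢ < 1`. -/
def boxSimplex {N d : ℕ} (v : Fin (d+1) → Pt N) : Set (Pt N × ℝ) :=
  {p | ∃ r : Fin (d+1) → ℝ, (∀ i, 0 ≤ r i ∧ r i < 1) ∧
      p.1 = ∑ i, r i • v i ∧ p.2 = ∑ i, r i ∧ IsLat p.1 ∧ ∃ z : ℤ, p.2 = (z : ℝ)}

/-- `Box(P)`: holes of `P`, i.e. box points of empty `d`-simplices in `P` that are not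
nonnegative integer combinations of `P̃ ∩ ℤ^{N+1}`. -/
def boxP {N : ℕ} (P : Set (Pt N)) (d : ℕ) : Set (Pt N × ℝ) :=
  (⋃ v ∈ {v : Fin (d+1) → Pt N | EmptySimplexIn P d v}, boxSimplex v) \ genMonoid P

/-- Ehrhart counting function `|nP ∩ ℤ^N|`. -/
noncomputable def ehr {N : ℕ} (P : Set (Pt N)) (n : ℕ) : ℕ := (latPts (dil n P)).ncard

/-- The `δ`-vector of a `d`-dimensional polytope, via finite differences of the
Ehrhart counting function. -/
noncomputable def deltaVec {N : ℕ} (P : Set (Pt N)) (d i : ℕ) : ℤ :=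
  ∑ j ∈ Finset.range (i+1), (-1)^j * ((d+1).choose j) * (ehr P (i - j) : ℤ)

/-!
Write a lattice point of `k(nP)` as `kn • x` with `x ∈ P`. The point `x` lies in an empty lattice
`d`-simplex `S ⊆ P`: by Carathéodory it lies in a `d`-simplex spanned by vertices of `P`, and as
long as that simplex contains a lattice point `w` other than its vertices, replacing a suitable
vertex by `w` (a pivot step) gives a smaller simplex, still containing `x`, with fewer lattice
points. In the barycentric coordinates `α = ∑ Cᵢ (vᵢ, 1)` of `S`, splitting each `Cᵢ` into its
integer and fractional parts gives `α = β + ∑ aᵢ vᵢ` with `β ∈ Box(S)` of some degree `m`. Either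
`β` is a sum of `m` lattice points of `P`, so that `α` is a sum of `kn` of them, which group into
`k` blocks of `n`; or `β` is a hole, so `m ≤ n`, and `β` together with `n - m` of the `vᵢ` is a
lattice point of `nP`, while the other `(k - 1)n` summands `vᵢ` group into `k - 1` blocks of `n`.
-/

open Set Function

section Lattice

variable {N : ℕ}

theorem isLat_iff_mem_span {x : Pt N} :
    IsLat x ↔ x ∈ Submodule.span ℤ (range (Pi.basisFun ℝ (Fin N))) := by
  rw [(Pi.basisFun ℝ (Fin N)).mem_span_iff_repr_mem ℤ x]
  simp [IsLat, eq_comm]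

theorem IsLat.add {x y : Pt N} (hx : IsLat x) (hy : IsLat y) : IsLat (x + y) :=
  isLat_iff_mem_span.2 (add_mem (isLat_iff_mem_span.1 hx) (isLat_iff_mem_span.1 hy))

theorem IsLat.sub {x y : Pt N} (hx : IsLat x) (hy : IsLat y) : IsLat (x - y) :=
  isLat_iff_mem_span.2 (sub_mem (isLat_iff_mem_span.1 hx) (isLat_iff_mem_span.1 hy))

theorem isLat_sum_nsmul {ι : Type*} [Fintype ι] {v : ι → Pt N} (hv : ∀ i, IsLat (v i))
    (a : ι → ℕ) : IsLat (∑ i, a i • v i) :=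
  isLat_iff_mem_span.2 (Submodule.sum_mem _ fun i _ => nsmul_mem (isLat_iff_mem_span.1 (hv i)) _)

theorem Bornology.IsBounded.finite_latPts {s : Set (Pt N)} (hs : Bornology.IsBounded s) :
    (latPts s).Finite :=
  (ZSpan.setFinite_inter (Pi.basisFun ℝ (Fin N)) hs).subset
    fun _ hx => ⟨hx.1, isLat_iff_mem_span.1 hx.2⟩

end Lattice

section AffineGeometry

variable {E : Type*} [AddCommGroup E] [Module ℝ E]

theorem mem_convexHull_range_iff {ι : Type*} [Fintype ι] {v : ι → E} {x : E} :
    x ∈ convexHull ℝ (range v) ↔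
      ∃ c : ι → ℝ, (∀ i, 0 ≤ c i) ∧ ∑ i, c i = 1 ∧ ∑ i, c i • v i = x := by
  classical
  refine ⟨fun hx => ?_, fun ⟨c, hc0, hc1, hcx⟩ =>
    mem_convexHull_of_exists_fintype c v hc0 hc1 (fun i => mem_range_self i) hcx⟩
  rw [convexHull_range_eq_exists_affineCombination] at hx
  obtain ⟨s, w, hw0, hw1, rfl⟩ := hx
  refine ⟨(s : Set ι).indicator w, fun i => ?_, ?_, ?_⟩
  · by_cases hi : i ∈ s <;> simp [hi, hw0]
  · rwa [Finset.sum_indicator_subset _ (Finset.subset_univ s)]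
  · rw [Finset.affineCombination_indicator_subset w v (Finset.subset_univ s),
      Finset.affineCombination_eq_linear_combination]
    rwa [Finset.sum_indicator_subset _ (Finset.subset_univ s)]

theorem AffineIndependent.fin_snoc {m : ℕ} {v : Fin (m + 1) → E} (hv : AffineIndependent ℝ v)
    {p : E} (hp : p ∉ affineSpan ℝ (range v)) :
    AffineIndependent ℝ (Fin.snoc v p : Fin (m + 2) → E) := by
  refine AffineIndependent.affineIndependent_of_notMem_span (i := Fin.last (m + 1)) ?_ ?_
  · let e : {y : Fin (m + 2) // y ≠ Fin.last (m + 1)} ↪ Fin (m + 1) :=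
      ⟨fun y => y.1.castPred y.2, fun y z h => Subtype.ext (Fin.castPred_inj.1 h)⟩
    have he : (fun y : {y // y ≠ Fin.last (m + 1)} => (Fin.snoc v p : Fin (m + 2) → E) y.1) =
        v ∘ e := by
      funext ⟨y, hy⟩
      obtain ⟨z, rfl⟩ := Fin.exists_castSucc_eq.2 hy
      simp only [Fin.snoc_castSucc, comp_apply]
      exact congrArg v Fin.castPred_castSucc.symm
    rw [he]
    exact hv.comp_embedding e
  · have : Fin.snoc v p '' {y | y ≠ Fin.last (m + 1)} = range v := by
      ext x
      simp [Fin.exists_fin_succ', Fin.castSucc_ne_last]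
    simpa [this] using hp

theorem exists_affineIndependent_extension [FiniteDimensional ℝ E] {s : Set E} {d : ℕ}
    (hs : Module.finrank ℝ (affineSpan ℝ s).direction = d) {m : ℕ} {v : Fin (m + 1) → E}
    (hvs : range v ⊆ s) (hv : AffineIndependent ℝ v) :
    ∃ u : Fin (d + 1) → E, range u ⊆ s ∧ AffineIndependent ℝ u ∧ range v ⊆ range u := by
  have hmd : m ≤ d := by
    rw [← hs, ← hv.finrank_vectorSpan (Fintype.card_fin _), ← direction_affineSpan]
    exact Submodule.finrank_mono (AffineSubspace.direction_le (affineSpan_mono ℝ hvs))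
  induction h : d - m generalizing m with
  | zero =>
    obtain rfl : m = d := by omega
    exact ⟨v, hvs, hv, subset_rfl⟩
  | succ j ih =>
    obtain ⟨p, hps, hp⟩ : ∃ p ∈ s, p ∉ affineSpan ℝ (range v) := by
      by_contra! hsv
      have := Submodule.finrank_mono (AffineSubspace.direction_le (affineSpan_le.2 hsv))
      rw [hs, direction_affineSpan, hv.finrank_vectorSpan (Fintype.card_fin _)] at this
      omega
    have hrange : range (Fin.snoc v p : Fin (m + 2) → E) = insert p (range v) :=
      Fin.range_snoc v p
    obtain ⟨u, hus, hu, hvu⟩ := ih (hrange ▸ insert_subset hps hvs) (hv.fin_snoc hp) (by omega)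
      (by omega)
    exact ⟨u, hus, hu, (subset_insert p _).trans (hrange ▸ hvu)⟩

theorem exists_affineIndependent_fin_mem_convexHull [FiniteDimensional ℝ E] {s : Set E}
    {d : ℕ} (hs : Module.finrank ℝ (affineSpan ℝ s).direction = d) {x : E}
    (hx : x ∈ convexHull ℝ s) :
    ∃ v : Fin (d + 1) → E, range v ⊆ s ∧ AffineIndependent ℝ v ∧ x ∈ convexHull ℝ (range v) := by
  rw [convexHull_eq_union] at hx
  simp only [mem_iUnion] at hx
  obtain ⟨t, hts, hti, hxt⟩ := hx
  obtain ⟨m, hm⟩ : ∃ m, t.card = m + 1 :=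
    Nat.exists_eq_add_one.2 <| Finset.card_pos.2 <| Finset.coe_nonempty.1 <|
      convexHull_nonempty_iff.1 ⟨x, hxt⟩
  let e : Fin (m + 1) ≃ t := (Fintype.equivFinOfCardEq (by simpa using hm)).symm
  have hrange : range (fun i => (e i : E)) = t := by
    ext y
    exact ⟨by rintro ⟨i, rfl⟩; exact (e i).2, fun hy => ⟨e.symm ⟨y, hy⟩, by simp⟩⟩
  obtain ⟨v, hvs, hv, htv⟩ :=
    exists_affineIndependent_extension hs (hrange ▸ hts) (hti.comp_embedding e.toEmbedding)
  exact ⟨v, hvs, hv, convexHull_mono (hrange ▸ htv) hxt⟩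

end AffineGeometry

section Pivot

variable {E ι : Type*} [AddCommGroup E] [Module ℝ E] [Fintype ι] [DecidableEq ι]
  {v : ι → E} {τ : ι → ℝ} {w : E}

theorem sum_smul_update_eq (hw : ∑ i, τ i • v i = w)
    (g : ι → ℝ) (j : ι) :
    ∑ i, g i • update v j w i = ∑ i, (update g j 0 i + g j * τ i) • v i := by
  have hl : ∑ i, g i • update v j w i = g j • w + ∑ i ∈ Finset.univ.erase j, g i • v i := by
    rw [← Finset.add_sum_erase _ _ (Finset.mem_univ j), update_self]
    congr 1
    exact Finset.sum_congr rfl fun i hi => by rw [update_of_ne (Finset.ne_of_mem_erase hi)]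
  have hr : ∑ i, update g j 0 i • v i = ∑ i ∈ Finset.univ.erase j, g i • v i := by
    rw [← Finset.add_sum_erase _ _ (Finset.mem_univ j), update_self, zero_smul, zero_add]
    exact Finset.sum_congr rfl fun i hi => by rw [update_of_ne (Finset.ne_of_mem_erase hi)]
  simp only [add_smul, Finset.sum_add_distrib, mul_smul, ← Finset.smul_sum, hw, hl, hr]
  abel

theorem sum_update_add_mul (hτ : ∑ i, τ i = 1) (g : ι → ℝ) (j : ι) :
    ∑ i, (update g j 0 i + g j * τ i) = ∑ i, g i := by
  rw [Finset.sum_add_distrib, ← Finset.mul_sum, hτ, mul_one, Finset.sum_update_of_mem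
    (Finset.mem_univ j), zero_add, Finset.sum_eq_sum_sdiff_singleton_add (Finset.mem_univ j)]

theorem AffineIndependent.update_of_ne_zero (hv : AffineIndependent ℝ v)
    (hw : ∑ i, τ i • v i = w) (hτ : ∑ i, τ i = 1) {j : ι} (hτj : τ j ≠ 0) :
    AffineIndependent ℝ (update v j w) := by
  refine hv.affineIndependent_update_of_notMem_affineSpan fun hmem => hτj ?_
  rw [← hw, ← Finset.univ.affineCombination_eq_linear_combination v τ hτ] at hmem
  exact hv.eq_zero_of_affineCombination_mem_affineSpan hτ hmem (Finset.mem_univ j) (by simp)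

theorem sum_smul_eq_of_apply_eq_one (hτ0 : ∀ i, 0 ≤ τ i) (hτ : ∑ i, τ i = 1) {j : ι}
    (hτj : τ j = 1) : ∑ i, τ i • v i = v j := by
  have hrest : ∑ i ∈ Finset.univ.erase j, τ i = 0 := by
    linarith [Finset.add_sum_erase _ τ (Finset.mem_univ j)]
  rw [Finset.sum_eq_single j (fun i _ hij => ?_) (by simp), hτj, one_smul]
  rw [(Finset.sum_eq_zero_iff_of_nonneg fun i _ => hτ0 i).1 hrest i
    (Finset.mem_erase.2 ⟨hij, Finset.mem_univ i⟩), zero_smul]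

theorem AffineIndependent.notMem_convexHull_update (hv : AffineIndependent ℝ v)
    (hw : ∑ i, τ i • v i = w) (hτ0 : ∀ i, 0 ≤ τ i) (hτ : ∑ i, τ i = 1) {j : ι} (hwj : w ≠ v j) :
    v j ∉ convexHull ℝ (range (update v j w)) := by
  intro hmem
  obtain ⟨e, he0, he, hev⟩ := mem_convexHull_range_iff.1 hmem
  rw [sum_smul_update_eq hw] at hev
  have hcoord := hv.eq_of_sum_eq_sum (w₁ := fun i => update e j 0 i + e j * τ i)
    (w₂ := Pi.single j 1) (by rw [sum_update_add_mul hτ, he]; simp) (by simpa using hev) j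
    (Finset.mem_univ j)
  simp only [update_self, zero_add, Pi.single_eq_same] at hcoord
  have he1 : e j ≤ 1 := he ▸ Finset.single_le_sum (fun i _ => he0 i) (Finset.mem_univ j)
  have hτ1 : τ j ≤ 1 := hτ ▸ Finset.single_le_sum (fun i _ => hτ0 i) (Finset.mem_univ j)
  exact hwj (hw ▸ sum_smul_eq_of_apply_eq_one hτ0 hτ (by nlinarith [he0 j, hτ0 j]))

theorem exists_update_mem_convexHull {c : ι → ℝ} (hc0 : ∀ i, 0 ≤ c i) (hc : ∑ i, c i = 1)
    (hw : ∑ i, τ i • v i = w) (hτ0 : ∀ i, 0 ≤ τ i) (hτ : ∑ i, τ i = 1) :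
    ∃ j, 0 < τ j ∧ ∑ i, c i • v i ∈ convexHull ℝ (range (update v j w)) := by
  have hpos : (Finset.univ.filter fun i => 0 < τ i).Nonempty := by
    by_contra! h
    have : ∑ i, τ i ≤ 0 := Finset.sum_nonpos fun i _ => by
      simpa using Finset.filter_eq_empty_iff.1 h (Finset.mem_univ i)
    linarith
  obtain ⟨j, hj, hmin⟩ := Finset.exists_min_image _ (fun i => c i / τ i) hpos
  have hτj : 0 < τ j := (Finset.mem_filter.1 hj).2
  set s := c j / τ j
  -- pivoting at the minimal ratio `c j / τ j` keeps all new weights nonnegative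
  have hsτ : ∀ i, s * τ i ≤ c i := fun i => by
    rcases (hτ0 i).lt_or_eq with hi | hi
    · have := hmin i (Finset.mem_filter.2 ⟨Finset.mem_univ i, hi⟩)
      rwa [le_div_iff₀ hi] at this
    · simp [← hi, hc0 i]
  let g : ι → ℝ := update (fun i => c i - s * τ i) j s
  have hg : ∀ i, update g j 0 i + g j * τ i = c i := fun i => by
    rcases eq_or_ne i j with rfl | hij
    · simp [g, s, div_mul_cancel₀ _ hτj.ne']
    · simp [g, hij]
  refine ⟨j, hτj, mem_convexHull_range_iff.2 ⟨g, fun i => ?_, ?_, ?_⟩⟩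
  · rcases eq_or_ne i j with rfl | hij
    · simpa [g] using div_nonneg (hc0 i) hτj.le
    · simpa [g, hij] using hsτ i
  · simp only [← sum_update_add_mul hτ g j, hg, hc]
  · simp only [sum_smul_update_eq hw, hg]

end Pivot

theorem exists_emptySimplexIn_of_affineIndependent {N d : ℕ} {P : Set (Pt N)} (hP : Convex ℝ P)
    {v : Fin (d + 1) → Pt N} (hvP : ∀ i, v i ∈ latPts P) (hv : AffineIndependent ℝ v) {x : Pt N}
    (hx : x ∈ convexHull ℝ (range v)) :
    ∃ u, EmptySimplexIn P d u ∧ x ∈ convexHull ℝ (range u) := by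
  classical
  induction hM : (latPts (convexHull ℝ (range v))).ncard using Nat.strong_induction_on
    generalizing v with
  | _ M ih =>
  by_cases hempty : ∀ y ∈ convexHull ℝ (range v), IsLat y → y ∈ range v
  · exact ⟨v, ⟨hvP, hv, hempty⟩, hx⟩
  push Not at hempty
  obtain ⟨w, hwv, hwlat, hwnot⟩ := hempty
  obtain ⟨c, hc0, hc, rfl⟩ := mem_convexHull_range_iff.1 hx
  obtain ⟨τ, hτ0, hτ, hτw⟩ := mem_convexHull_range_iff.1 hwv
  obtain ⟨j, hτj, hxu⟩ := exists_update_mem_convexHull hc0 hc hτw hτ0 hτ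
  have hvP' : convexHull ℝ (range v) ⊆ P :=
    convexHull_min (range_subset_iff.2 fun i => (hvP i).1) hP
  have hsub : convexHull ℝ (range (update v j w)) ⊆ convexHull ℝ (range v) := by
    refine convexHull_min (range_subset_iff.2 fun i => ?_) (convex_convexHull ℝ _)
    rcases eq_or_ne i j with rfl | hij
    · simpa using hwv
    · simpa [hij] using subset_convexHull ℝ _ (mem_range_self i)
  have hlt : (latPts (convexHull ℝ (range (update v j w)))).ncard < M := by
    rw [← hM]
    refine ncard_lt_ncard ⟨fun y hy => ⟨hsub hy.1, hy.2⟩, fun h => ?_⟩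
      (isBounded_convexHull.2 (finite_range v).isBounded).finite_latPts
    exact hv.notMem_convexHull_update hτw hτ0 hτ (fun hwj => hwnot ⟨j, hwj.symm⟩)
      (h ⟨subset_convexHull ℝ _ (mem_range_self j), (hvP j).2⟩).1
  refine ih _ hlt (fun i => ?_) (hv.update_of_ne_zero hτw hτ hτj.ne') hxu rfl
  rcases eq_or_ne i j with rfl | hij
  · simpa using ⟨hvP' hwv, hwlat⟩
  · simpa [hij] using hvP i

theorem exists_emptySimplexIn_mem_convexHull {N d : ℕ} {S : Set (Pt N)} (hS : ∀ v ∈ S, IsLat v)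
    (hd : polyDim (convexHull ℝ S) = d) {x : Pt N} (hx : x ∈ convexHull ℝ S) :
    ∃ v, EmptySimplexIn (convexHull ℝ S) d v ∧ x ∈ convexHull ℝ (range v) := by
  rw [polyDim, affineSpan_convexHull] at hd
  obtain ⟨v, hvS, hv, hxv⟩ := exists_affineIndependent_fin_mem_convexHull hd hx
  exact exists_emptySimplexIn_of_affineIndependent (convex_convexHull ℝ S)
    (fun i => ⟨subset_convexHull ℝ S (hvS (mem_range_self i)), hS _ (hvS (mem_range_self i))⟩)
    hv hxv

-- For `k : ℕ` and a set `S`, `k • S` is the `k`-fold Minkowski sum `S + ⋯ + S`, not `dil k S`.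
theorem decomposesIn_iff_mem_nsmul {N k : ℕ} {P : Set (Pt N)} {α : Pt N} :
    DecomposesIn P k α ↔ α ∈ k • latPts P := by
  simp only [DecomposesIn, Set.mem_nsmul_iff_sum, eq_comm]

theorem mem_genMonoid_iff {N m : ℕ} {P : Set (Pt N)} {x : Pt N} :
    (x, (m : ℝ)) ∈ genMonoid P ↔ x ∈ m • latPts P := by
  simp only [genMonoid, mem_ofPred_eq, Nat.cast_inj, Set.mem_nsmul_iff_sum]
  constructor
  · rintro ⟨m, f, hf, rfl, rfl⟩
    exact ⟨f, hf, rfl⟩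
  · rintro ⟨f, hf, rfl⟩
    exact ⟨m, f, hf, rfl, rfl⟩

theorem sum_nsmul_mem_nsmul {E ι : Type*} [AddCommMonoid E] [Fintype ι] {S : Set E} {v : ι → E}
    (hv : ∀ i, v i ∈ S) (a : ι → ℕ) : ∑ i, a i • v i ∈ (∑ i, a i) • S := by
  rw [← Finset.sum_nsmul_assoc]
  exact Set.finsetSum_mem_finsetSum _ _ _ fun i _ => Set.nsmul_mem_nsmul (hv i)

section Dilation

variable {N : ℕ} {P : Set (Pt N)}

theorem dil_one : dil 1 P = P := by
  simp [dil]

theorem dil_dil (k n : ℕ) : dil k (dil n P) = dil (k * n) P := by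
  simp [dil, smul_smul]

theorem Convex.sum_smul_mem_dil (hP : Convex ℝ P) (hne : P.Nonempty) {ι : Type*} [Fintype ι]
    {r : ι → ℝ} (hr0 : ∀ i, 0 ≤ r i) {v : ι → Pt N} (hv : ∀ i, v i ∈ P) {m : ℕ}
    (hr : ∑ i, r i = m) : ∑ i, r i • v i ∈ dil m P := by
  rcases Nat.eq_zero_or_pos m with rfl | hm
  · have hr : ∀ i, r i = 0 := fun i =>
      (Finset.sum_eq_zero_iff_of_nonneg fun i _ => hr0 i).1 (by simpa using hr) i
        (Finset.mem_univ i)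
    simp [dil, hr, zero_smul_set hne]
  · have hm' : (m : ℝ) ≠ 0 := by positivity
    have hc := hP.centerMass_mem (t := Finset.univ) (fun i _ => hr0 i) (by simpa [hr] using hm)
      fun i _ => hv i
    rw [Finset.centerMass, hr] at hc
    simpa [dil, smul_inv_smul₀ hm'] using smul_mem_smul_set (a := (m : ℝ)) hc

theorem Convex.latPts_dil_add_subset (hP : Convex ℝ P) (a b : ℕ) :
    latPts (dil a P) + latPts (dil b P) ⊆ latPts (dil (a + b) P) := by
  rintro _ ⟨x, hx, y, hy, rfl⟩
  refine ⟨?_, hx.2.add hy.2⟩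
  rw [dil, Nat.cast_add, hP.add_smul (Nat.cast_nonneg a) (Nat.cast_nonneg b)]
  exact add_mem_add hx.1 hy.1

theorem Convex.nsmul_latPts_subset (hP : Convex ℝ P) (hne : P.Nonempty) (k : ℕ) :
    k • latPts P ⊆ latPts (dil k P) := by
  induction k with
  | zero =>
    simpa [dil, zero_smul_set hne, latPts] using isLat_iff_mem_span.2 (zero_mem _)
  | succ k ih =>
    rw [succ_nsmul]
    exact (add_subset_add ih (by rw [dil_one])).trans (hP.latPts_dil_add_subset k 1)

theorem Convex.nsmul_mul_latPts_subset (hP : Convex ℝ P) (hne : P.Nonempty) (k n : ℕ) :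
    (k * n) • latPts P ⊆ k • latPts (dil n P) := by
  rw [mul_nsmul']
  exact Set.nsmul_subset_nsmul_left (hP.nsmul_latPts_subset hne n)

theorem Convex.latPts_dil_add_nsmul_subset (hP : Convex ℝ P) (hne : P.Nonempty) {k m n : ℕ}
    (hk : 0 < k) (hmn : m ≤ n) :
    latPts (dil m P) + (k * n - m) • latPts P ⊆ k • latPts (dil n P) := by
  obtain ⟨k, rfl⟩ := Nat.exists_eq_add_one_of_ne_zero hk.ne'
  have hsplit : (k + 1) * n - m = (n - m) + k * n := by
    rw [add_mul, one_mul]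
    omega
  rw [hsplit, add_nsmul, ← add_assoc, succ_nsmul']
  refine add_subset_add ?_ (hP.nsmul_mul_latPts_subset hne k n)
  calc latPts (dil m P) + (n - m) • latPts P
      ⊆ latPts (dil m P) + latPts (dil (n - m) P) :=
        add_subset_add subset_rfl (hP.nsmul_latPts_subset hne _)
    _ ⊆ latPts (dil (m + (n - m)) P) := hP.latPts_dil_add_subset _ _
    _ = latPts (dil n P) := by rw [Nat.add_sub_cancel' hmn]

theorem Convex.mem_latPts_dil_of_mem_boxSimplex (hP : Convex ℝ P) (hne : P.Nonempty) {d m : ℕ}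
    {v : Fin (d + 1) → Pt N} (hv : ∀ i, v i ∈ P) {x : Pt N} (hx : (x, (m : ℝ)) ∈ boxSimplex v) :
    x ∈ latPts (dil m P) := by
  obtain ⟨r, hr, rfl, hrm, hx, -⟩ := hx
  exact ⟨hP.sum_smul_mem_dil hne (fun i => (hr i).1) hv hrm.symm, hx⟩

end Dilation

theorem exists_mem_boxSimplex_add {N d : ℕ} {v : Fin (d + 1) → Pt N} (hv : ∀ i, IsLat (v i))
    {C : Fin (d + 1) → ℝ} (hC0 : ∀ i, 0 ≤ C i) {K : ℕ} (hK : ∑ i, C i = K)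
    (hα : IsLat (∑ i, C i • v i)) :
    ∃ (a : Fin (d + 1) → ℕ) (m : ℕ), m + ∑ i, a i = K ∧
      (∑ i, C i • v i - ∑ i, a i • v i, (m : ℝ)) ∈ boxSimplex v := by
  set a : Fin (d + 1) → ℕ := fun i => ⌊C i⌋₊
  have ha : ∑ i, a i ≤ K := by
    have : ∑ i, (a i : ℝ) ≤ K := hK ▸ Finset.sum_le_sum fun i _ => Nat.floor_le (hC0 i)
    exact_mod_cast this
  refine ⟨a, K - ∑ i, a i, Nat.sub_add_cancel ha, fun i => C i - a i, fun i =>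
    ⟨sub_nonneg.2 (Nat.floor_le (hC0 i)), by linarith [Nat.lt_floor_add_one (C i)]⟩, ?_, ?_,
    hα.sub (isLat_sum_nsmul hv a), _, (Int.cast_natCast _).symm⟩
  · simp [sub_smul, Finset.sum_sub_distrib, Nat.cast_smul_eq_nsmul]
  · simp [Finset.sum_sub_distrib, hK, Nat.cast_sub ha]

theorem idp_of_ge_muHole_general {N d : ℕ} (P : Set (Pt N))
    (hP : IsIntegralPolytope P) (hdim : polyDim P = d)
    (n : ℕ) (hn : ∀ p ∈ boxP P d, p.2 ≤ (n : ℝ)) :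
    HasIDP (dil n P) := by
  obtain ⟨V, hVlat, rfl⟩ := hP
  have hconv := convex_convexHull ℝ (V : Set (Pt N))
  intro k hk α ⟨hα, hαlat⟩
  rw [dil_dil] at hα
  obtain ⟨x, hx, rfl⟩ := Set.mem_smul_set.1 hα
  have hne : (convexHull ℝ (V : Set (Pt N))).Nonempty := ⟨x, hx⟩
  obtain ⟨v, hv, hxv⟩ := exists_emptySimplexIn_mem_convexHull hVlat hdim hx
  obtain ⟨c, hc0, hc, rfl⟩ := mem_convexHull_range_iff.1 hxv
  simp only [Finset.smul_sum, smul_smul] at hαlat ⊢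
  obtain ⟨a, m, hmK, hbox⟩ := exists_mem_boxSimplex_add (fun i => (hv.1 i).2)
    (fun i => mul_nonneg (Nat.cast_nonneg _) (hc0 i)) (by rw [← Finset.mul_sum, hc, mul_one])
    hαlat
  rw [decomposesIn_iff_mem_nsmul, ← sub_add_cancel (∑ i, _ • v i) (∑ i, a i • v i)]
  set β := ∑ i, (((k * n : ℕ) : ℝ) * c i) • v i - ∑ i, a i • v i
  have hav := sum_nsmul_mem_nsmul (fun i => hv.1 i) a
  by_cases hβ : (β, (m : ℝ)) ∈ genMonoid (convexHull ℝ (V : Set (Pt N)))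
  · refine hconv.nsmul_mul_latPts_subset hne k n ?_
    rw [← hmK, add_nsmul]
    exact add_mem_add (mem_genMonoid_iff.1 hβ) hav
  · have hmn : (m : ℝ) ≤ n := hn _ ⟨mem_biUnion hv hbox, hβ⟩
    refine hconv.latPts_dil_add_nsmul_subset hne hk (mod_cast hmn) (add_mem_add
      (hconv.mem_latPts_dil_of_mem_boxSimplex hne (fun i => (hv.1 i).1) hbox) ?_)
    rwa [← hmK, Nat.add_sub_cancel_left]

/-- if every hole of `P` has degree at most `n` (and `n ≥ 1`),
then the dilation `nP` possesses (IDP); in particular `μ_idp(P) ≤ μ_hole(P)`. -/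
theorem idp_of_ge_muHole {N d : ℕ} (P : Set (Pt N))
    (hP : IsIntegralPolytope P) (hdim : polyDim P = d)
    (n : ℕ) (hn1 : 1 ≤ n) (hn : ∀ p ∈ boxP P d, p.2 ≤ (n : ℝ)) :
    HasIDP (dil n P) :=
  idp_of_ge_muHole_general P hP hdim n hn
end

section
/- Let P ⊂ ℝ^N be an integral convex polytope of dimension d with Box(P) nonempty, and let m denote the maximal degree of an element of Box(P). Then (d+1−m)(P ∖ ∂P) contains a lattice point; consequently the largest index i with δᵢ ≠ 0 in the δ-vector of P is at least m, i.e., μ_hole(P) ≤ μ_Ehr(P). -/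
/-!
Take a hole `p = Σ rᵢ (vᵢ, 1)` of degree `m` in a full-dimensional simplex with lattice
vertices `vᵢ ∈ P`. Its reflection `x = Σ (1 - rᵢ) vᵢ = Σ vᵢ - p` through the box is again a
lattice point, and since the weights `1 - rᵢ` are positive with sum `d + 1 - m`, the point
`x / (d + 1 - m)` lies in the relative interior of the simplex, hence of `P`.
-/

open scoped BigOperators Pointwise

open Finset

attribute [local instance] AffineSubspace.toNormedAddTorsor

theorem AffineBasis.coe_eq_sum_coord_smul {ι k E : Type*} [Fintype ι] [Ring k] [AddCommGroup E]
    [Module k E] {S : AffineSubspace k E} [Nonempty S] (b : AffineBasis ι k S) (z : S) :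
    (z : E) = ∑ i, b.coord i z • (b i : E) := by
  have h := congrArg S.subtype (b.affineCombination_coord_eq_self z)
  rw [Finset.map_affineCombination _ _ _ (b.sum_coord_apply_eq_one z),
    affineCombination_eq_linear_combination _ _ _ (b.sum_coord_apply_eq_one z)] at h
  exact h.symm

theorem AffineBasis.isOpen_setOf_forall_coord_pos {ι V P : Type*} [Finite ι]
    [NormedAddCommGroup V] [NormedSpace ℝ V] [MetricSpace P] [NormedAddTorsor V P]
    [FiniteDimensional ℝ V] (b : AffineBasis ι ℝ P) : IsOpen {z | ∀ i, 0 < b.coord i z} := by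
  simp only [Set.ofPred_forall]
  exact isOpen_iInter_of_finite fun i =>
    isOpen_lt continuous_const (continuous_barycentric_coord b i)

section Simplex

variable {E ι : Type*} [NormedAddCommGroup E] [NormedSpace ℝ E] [FiniteDimensional ℝ E]
  [Fintype ι] {s : Set E} {v : ι → E} {w : ι → ℝ}

theorem Convex.sum_smul_mem_intrinsicInterior (hs : Convex ℝ s) (hv : AffineIndependent ℝ v)
    (hvs : ∀ i, v i ∈ s)
    (hcard : Fintype.card ι = Module.finrank ℝ (affineSpan ℝ s).direction + 1)
    (hw : ∀ i, 0 < w i) (hw1 : ∑ i, w i = 1) :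
    ∑ i, w i • v i ∈ intrinsicInterior ℝ s := by
  have : Nonempty ι := Fintype.card_pos_iff.1 (by omega)
  have : Nonempty (affineSpan ℝ s) :=
    ⟨⟨_, subset_affineSpan ℝ s (hvs (Classical.arbitrary ι))⟩⟩
  let v' : ι → affineSpan ℝ s := fun i => ⟨v i, subset_affineSpan ℝ s (hvs i)⟩
  have hv' : AffineIndependent ℝ v' := AffineIndependent.of_comp (affineSpan ℝ s).subtype hv
  let b : AffineBasis ι ℝ (affineSpan ℝ s) :=
    ⟨v', hv', hv'.affineSpan_eq_top_iff_card_eq_finrank_add_one.2 hcard⟩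
  have hcoe (z : affineSpan ℝ s) : (z : E) = ∑ i, b.coord i z • v i :=
    b.coe_eq_sum_coord_smul z
  let y : affineSpan ℝ s := univ.affineCombination ℝ b w
  have hy (i : ι) : b.coord i y = w i := b.coord_apply_combination_of_mem (mem_univ i) hw1
  have hpos : {z | ∀ i, 0 < b.coord i z} ⊆ (↑) ⁻¹' s := fun z hz => by
    rw [Set.mem_preimage, hcoe]
    exact hs.sum_mem (fun i _ => (hz i).le) (b.sum_coord_apply_eq_one z) fun i _ => hvs i
  refine mem_intrinsicInterior.2
    ⟨y, mem_interior.2 ⟨_, hpos, b.isOpen_setOf_forall_coord_pos, fun i => ?_⟩, ?_⟩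
  · rw [hy]; exact hw i
  · simp only [hcoe, hy]

theorem Convex.sum_smul_mem_smul_intrinsicInterior (hs : Convex ℝ s)
    (hv : AffineIndependent ℝ v) (hvs : ∀ i, v i ∈ s)
    (hcard : Fintype.card ι = Module.finrank ℝ (affineSpan ℝ s).direction + 1)
    (hw : ∀ i, 0 < w i) :
    ∑ i, w i • v i ∈ (∑ i, w i) • intrinsicInterior ℝ s := by
  have : Nonempty ι := Fintype.card_pos_iff.1 (by omega)
  have hc : 0 < ∑ i, w i := Finset.sum_pos (fun i _ => hw i) univ_nonempty
  refine Set.mem_smul_set.2 ⟨_, hs.sum_smul_mem_intrinsicInterior hv hvs hcard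
    (w := fun i => w i / ∑ j, w j) (fun i => div_pos (hw i) hc) ?_, ?_⟩
  · rw [← Finset.sum_div, div_self hc.ne']
  · simp only [Finset.smul_sum, smul_smul, mul_div_cancel₀ _ hc.ne']

end Simplex

namespace IsLat

variable {N : ℕ}

theorem sub_s3 {x y : Pt N} (hx : IsLat x) (hy : IsLat y) : IsLat (x - y) := fun j => by
  obtain ⟨a, ha⟩ := hx j
  obtain ⟨b, hb⟩ := hy j
  exact ⟨a - b, by simp [ha, hb]⟩

theorem sum {ι : Type*} (s : Finset ι) {x : ι → Pt N} (hx : ∀ i ∈ s, IsLat (x i)) :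
    IsLat (∑ i ∈ s, x i) := fun j => by
  choose a ha using fun i (hi : i ∈ s) => hx i hi j
  exact ⟨∑ i ∈ s.attach, a i i.2, by simp [Finset.sum_apply, ha, ← Finset.sum_attach s]⟩

end IsLat

theorem boxSimplex_snd_lt {N d : ℕ} {v : Fin (d + 1) → Pt N} {p : Pt N × ℝ}
    (hp : p ∈ boxSimplex v) : p.2 < d + 1 := by
  obtain ⟨r, hr, -, hp2, -⟩ := hp
  calc p.2 = ∑ i, r i := hp2
    _ < ∑ _i : Fin (d + 1), (1 : ℝ) :=
      Finset.sum_lt_sum_of_nonempty univ_nonempty fun i _ => (hr i).2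
    _ = d + 1 := by simp

theorem exists_isLat_mem_dil_intrinsicInterior_of_mem_boxSimplex {N d m : ℕ} {P : Set (Pt N)}
    (hP : Convex ℝ P) (hdim : polyDim P = d) {v : Fin (d + 1) → Pt N}
    (hvP : ∀ i, v i ∈ latPts P) (hv : AffineIndependent ℝ v) {p : Pt N × ℝ}
    (hp : p ∈ boxSimplex v) (hpm : p.2 = m) :
    m ≤ d ∧ ∃ x ∈ dil (d + 1 - m) (intrinsicInterior ℝ P), IsLat x := by
  have hmd : m ≤ d := Nat.lt_succ_iff.1 (by exact_mod_cast hpm ▸ boxSimplex_snd_lt hp)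
  obtain ⟨r, hr, hp1, hp2, hplat, -⟩ := hp
  have hx : ∑ i, (1 - r i) • v i = ∑ i, v i - p.1 := by
    simp only [hp1, sub_smul, one_smul, Finset.sum_sub_distrib]
  have hsum : ∑ i, (1 - r i) = ((d + 1 - m : ℕ) : ℝ) := by
    rw [Finset.sum_sub_distrib, ← hp2, hpm, Nat.cast_sub (by omega)]
    simp
  have hmem := hP.sum_smul_mem_smul_intrinsicInterior hv (fun i => (hvP i).1)
    (by simp [← hdim, polyDim]) (w := fun i => 1 - r i) fun i => sub_pos.2 (hr i).2
  rw [hsum] at hmem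
  exact ⟨hmd, _, hmem, hx ▸ (IsLat.sum _ fun i _ => (hvP i).2).sub_s3 hplat⟩

/-- if `Box(P)` is nonempty with maximal degree `m`, then
`(d+1-m)(P ∖ ∂P)` contains a lattice point; consequently
`μ_hole(P) ≤ μ_Ehr(P)`, phrased via Ehrhart reciprocity. -/
theorem hole_le_ehr {N d : ℕ} (P : Set (Pt N))
    (hP : IsIntegralPolytope P) (hdim : polyDim P = d)
    (m : ℕ) (hm : IsGreatest {t : ℝ | ∃ p ∈ boxP P d, p.2 = t} (m : ℝ)) :
    (∃ x ∈ dil (d + 1 - m) (intrinsicInterior ℝ P), IsLat x) ∧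
    ∀ k₀ : ℕ,
      IsLeast {k : ℕ | 0 < k ∧ ∃ x ∈ dil k (intrinsicInterior ℝ P), IsLat x} k₀ →
      m ≤ d + 1 - k₀ := by
  obtain ⟨V, -, rfl⟩ := hP
  obtain ⟨p, ⟨hp, -⟩, hpm⟩ := hm.1
  obtain ⟨v, ⟨hvP, hv, -⟩, hpv⟩ := Set.mem_iUnion₂.1 hp
  obtain ⟨hmd, x, hx, hxlat⟩ := exists_isLat_mem_dil_intrinsicInterior_of_mem_boxSimplex
    (convex_convexHull ℝ _) hdim hvP hv hpv hpm
  refine ⟨⟨x, hx, hxlat⟩, fun k₀ hk₀ => ?_⟩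
  have := hk₀.2 ⟨by omega, x, hx, hxlat⟩
  omega
end

section
/- Let d = 2m−1 with m ≥ 4, and let P ⊂ ℝ^d be the simplex with vertices 0, e₁,…,e_{d−1}, and (m−1)(e₁+⋯+e_{d−1}) + m·e_d. Then Box(P) = {(j,j,…,j,2j) ∈ ℤ^{d+1} : j = 1,…,m−1} (where the last coordinate 2j is the degree), so μ_hole(P) = 2m−2 = d−1, while the only Hilbert basis element of C(P) of degree ≥ 2 is (1,…,1,2), so μ_Hilb(P) = 2. -/
open scoped BigOperators Pointwise

/-- Vertex set of the simplex of Example 2.3: `0`, `e₁, …, e_{d-1}`, and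
`(m-1)(e₁+⋯+e_{d-1}) + m·e_d`, where `d = 2m-1`. -/
def Vm (m : ℕ) : Set (Pt (2*m-1)) :=
  {0} ∪ {x : Pt (2*m-1) | ∃ k : Fin (2*m-1), (k : ℕ) < 2*m-2 ∧
          x = fun l => if l = k then (1:ℝ) else 0}
    ∪ {(fun k => if (k : ℕ) < 2*m-2 then ((m:ℝ) - 1) else (m:ℝ) : Pt (2*m-1))}

/-- The simplex of Example 2.3 in dimension `d = 2m-1`. -/
def Pm (m : ℕ) : Set (Pt (2*m-1)) := convexHull ℝ (Vm m)


/-!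
The forms `bary m b`, `b : Fin (2m)`, are `m` times the barycentric coordinates with respect to
the vertices of `P`, and at a lattice point of `ℝ^{d+1}` they are all congruent modulo `m` to the
last coordinate `t`. Writing `t ≡ j (mod m)` with `0 ≤ j < m`, every lattice point of the cone
`C(P)` is `j • (1,…,1,2)` plus a nonnegative integer combination of the lifted vertices. Hence
`(1,…,1,2)` and the lifted vertices generate `C(P) ∩ ℤ^{d+1}`, the vertices are the only lattice
points of `P`, and the box points of the (unique) empty `d`-simplex are the `j • (1,…,1,2)` with
`0 ≤ j < m`. Sums of lifted lattice points of `P` have last coordinate divisible by `m`, so the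
points `(j,…,j,2j)` with `1 ≤ j < m` are holes and `(1,…,1,2)` belongs to every Hilbert basis.
-/

section General

variable {N : ℕ}

def homog (u : Pt N) : Pt N × ℝ := (u, 1)

@[simp] lemma homog_fst (u : Pt N) : (homog u).1 = u := rfl

@[simp] lemma homog_snd (u : Pt N) : (homog u).2 = 1 := rfl

lemma sum_smul_homog {ι : Type*} (s : Finset ι) (c : ι → ℝ) (w : ι → Pt N) :
    ∑ i ∈ s, c i • homog (w i) = (∑ i ∈ s, c i • w i, ∑ i ∈ s, c i) :=
  Prod.ext (by simp [Prod.fst_sum]) (by simp [Prod.snd_sum])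

lemma convex_setOf_nonneg_homog (φ : Pt N × ℝ →ₗ[ℝ] ℝ) :
    Convex ℝ {u : Pt N | 0 ≤ φ (homog u)} := by
  intro x hx y hy a b ha hb hab
  have hsplit : homog (a • x + b • y) = a • homog x + b • homog y := by
    ext <;> simp [homog, hab]
  simp only [Set.mem_ofPred_eq, hsplit, map_add, map_smul, smul_eq_mul] at hx hy ⊢
  positivity

lemma eq_sum_homog_of_mem_coneLat {P : Set (Pt N)} {p : Pt N × ℝ} (hp : p ∈ coneLat P) :
    ∃ (n : ℕ) (c : Fin n → ℝ) (w : Fin n → Pt N),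
      (∀ i, 0 ≤ c i ∧ w i ∈ P) ∧ p = ∑ i, c i • homog (w i) := by
  obtain ⟨⟨n, c, w, hcw, h1, h2⟩, -⟩ := hp
  exact ⟨n, c, w, hcw, by rw [sum_smul_homog, ← h1, ← h2]⟩

lemma mem_coneLat_of_eq_sum {P : Set (Pt N)} {p : Pt N × ℝ} {n : ℕ} {c : Fin n → ℝ}
    {w : Fin n → Pt N} (hcw : ∀ i, 0 ≤ c i ∧ w i ∈ P) (hp : p = ∑ i, c i • homog (w i))
    (hlat : IsLat p.1) (hdeg : ∃ z : ℤ, p.2 = z) : p ∈ coneLat P :=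
  ⟨⟨n, c, w, hcw, by rw [hp, sum_smul_homog], by rw [hp, sum_smul_homog]⟩, hlat, hdeg⟩

lemma homog_mem_coneLat {P : Set (Pt N)} {u : Pt N} (hu : u ∈ latPts P) :
    homog u ∈ coneLat P :=
  mem_coneLat_of_eq_sum (c := fun _ : Fin 1 => 1) (w := fun _ => u)
    (fun _ => ⟨zero_le_one, hu.1⟩) (by simp) hu.2 ⟨1, by simp⟩

lemma nonneg_of_mem_coneLat_convexHull (φ : Pt N × ℝ →ₗ[ℝ] ℝ) {V : Set (Pt N)}
    (hV : ∀ u ∈ V, 0 ≤ φ (homog u)) {p : Pt N × ℝ} (hp : p ∈ coneLat (convexHull ℝ V)) :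
    0 ≤ φ p := by
  obtain ⟨n, c, w, hcw, rfl⟩ := eq_sum_homog_of_mem_coneLat hp
  have hP : convexHull ℝ V ⊆ {u | 0 ≤ φ (homog u)} :=
    convexHull_min hV (convex_setOf_nonneg_homog φ)
  simp only [map_sum, map_smul, smul_eq_mul]
  exact Finset.sum_nonneg fun i _ => mul_nonneg (hcw i).1 (hP (hcw i).2)

lemma genMonoid_subset_closure (P : Set (Pt N)) :
    genMonoid P ⊆ AddSubmonoid.closure (homog '' latPts P) := by
  rintro p ⟨n, f, hf, h1, h2⟩
  have hp : p = ∑ i, homog (f i) :=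
    Prod.ext (by simp [h1, Prod.fst_sum]) (by simp [h2, Prod.snd_sum])
  rw [hp]
  exact AddSubmonoid.sum_mem _ fun i _ =>
    AddSubmonoid.subset_closure (Set.mem_image_of_mem _ (hf i))

lemma mem_of_mem_closure_of_snd_eq_one {M : Type*} [AddMonoid M] {S : Set (M × ℝ)}
    (hS : ∀ s ∈ S, 1 ≤ s.2) {p : M × ℝ} (hp : p ∈ AddSubmonoid.closure S) (hp1 : p.2 = 1) :
    p ∈ S := by
  have key : ∀ q ∈ AddSubmonoid.closure S, q = 0 ∨ (1 ≤ q.2 ∧ (q.2 = 1 → q ∈ S)) := by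
    intro q hq
    induction hq using AddSubmonoid.closure_induction with
    | mem s hs => exact Or.inr ⟨hS s hs, fun _ => hs⟩
    | zero => exact Or.inl rfl
    | add x y _ _ hx hy =>
      rcases hx with rfl | hx
      · simpa using hy
      rcases hy with rfl | hy
      · simpa using Or.inr hx
      refine Or.inr ⟨?_, fun h => ?_⟩ <;> simp only [Prod.snd_add] at * <;> linarith [hx.1, hy.1]
  rcases key p hp with rfl | h
  · simp at hp1
  · exact h.2 hp1

lemma boxSimplex_comp_perm_subset {d : ℕ} (v : Fin (d+1) → Pt N) (σ : Equiv.Perm (Fin (d+1))) :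
    boxSimplex (v ∘ σ) ⊆ boxSimplex v := by
  rintro p ⟨r, hr, h1, h2, hlat⟩
  refine ⟨r ∘ σ.symm, fun i => hr _, ?_, ?_, hlat⟩
  · rw [h1, ← Equiv.sum_comp σ (fun i => (r ∘ σ.symm) i • v i)]; simp
  · rw [h2, ← Equiv.sum_comp σ (r ∘ σ.symm)]; simp

lemma boxSimplex_comp_perm {d : ℕ} (v : Fin (d+1) → Pt N) (σ : Equiv.Perm (Fin (d+1))) :
    boxSimplex (v ∘ σ) = boxSimplex v := by
  refine (boxSimplex_comp_perm_subset v σ).antisymm ?_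
  simpa [Function.comp_assoc] using boxSimplex_comp_perm_subset (v ∘ σ) σ.symm

lemma exists_perm_eq_comp_of_range_subset {α : Type*} {n : ℕ} {v w : Fin n → α}
    (hv : Function.Injective v) (hw : Function.Injective w) (h : Set.range v ⊆ Set.range w) :
    ∃ σ : Equiv.Perm (Fin n), v = w ∘ σ := by
  let f : Fin n → Fin n := fun i => (Equiv.ofInjective w hw).symm ⟨v i, h ⟨i, rfl⟩⟩
  have hwf : ∀ i, w (f i) = v i := fun i =>
    congrArg Subtype.val ((Equiv.ofInjective w hw).apply_symm_apply ⟨v i, h ⟨i, rfl⟩⟩)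
  have hf : Function.Injective f := fun i j hij => hv (by rw [← hwf, hij, hwf])
  exact ⟨Equiv.ofBijective f (Finite.injective_iff_bijective.1 hf), funext fun i => (hwf i).symm⟩

lemma boxSimplex_eq_of_range_subset {d : ℕ} {v w : Fin (d+1) → Pt N}
    (hv : Function.Injective v) (hw : Function.Injective w) (h : Set.range v ⊆ Set.range w) :
    boxSimplex v = boxSimplex w := by
  obtain ⟨σ, rfl⟩ := exists_perm_eq_comp_of_range_subset hv hw h
  exact boxSimplex_comp_perm w σ

lemma affineIndependent_of_dual {ι : Type*} [DecidableEq ι] {v : ι → Pt N}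
    (ψ : ι → Pt N × ℝ →ₗ[ℝ] ℝ) {c : ℝ} (hc : c ≠ 0)
    (hψ : ∀ a b, ψ b (homog (v a)) = if a = b then c else 0) : AffineIndependent ℝ v := by
  rw [affineIndependent_iff]
  intro s w hw hsum b hb
  have hzero : ∑ a ∈ s, w a • homog (v a) = 0 := by rw [sum_smul_homog, hsum, hw]; rfl
  have := congrArg (ψ b) hzero
  simp only [map_sum, map_smul, hψ, smul_eq_mul, mul_ite, mul_zero, Finset.sum_ite_eq',
    if_pos hb, map_zero] at this
  exact (mul_eq_zero.1 this).resolve_right hc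

end General

namespace Pm

variable {m : ℕ} [NeZero m]

lemma cast_pos : (0 : ℝ) < m := Nat.cast_pos.2 (NeZero.pos m)

lemma cast_two_mul_sub_one : ((2*m-1 : ℕ) : ℝ) = 2*m - 1 := by
  have := NeZero.pos m
  rw [Nat.cast_sub (by omega)]; push_cast; ring

def lastIdx (m : ℕ) [NeZero m] : Fin (2*m-1) := ⟨2*m-2, by have := NeZero.pos m; omega⟩

lemma val_lt_iff_ne_lastIdx (l : Fin (2*m-1)) : (l : ℕ) < 2*m-2 ↔ l ≠ lastIdx m := by
  rw [Ne, Fin.ext_iff]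
  have := l.isLt
  simp only [lastIdx]
  omega

def bigVertex (m : ℕ) : Pt (2*m-1) := fun k => if (k : ℕ) < 2*m-2 then (m:ℝ) - 1 else m

lemma bigVertex_apply (l : Fin (2*m-1)) :
    bigVertex m l = m - 1 + if l = lastIdx m then 1 else 0 := by
  by_cases h : l = lastIdx m <;> simp [bigVertex, val_lt_iff_ne_lastIdx, h]

lemma sum_bigVertex : ∑ l, bigVertex m l = (2*m - 1) * (m - 1) + 1 := by
  simp [bigVertex_apply, Finset.sum_add_distrib, cast_two_mul_sub_one]
  ring

/-- The vertices of `Pm m`: `castSucc l` is `e_l` for `l ≠ lastIdx m` and the big vertex for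
`l = lastIdx m`; `last` is the origin. -/
def vertex (m : ℕ) [NeZero m] : Fin (2*m-1+1) → Pt (2*m-1) :=
  Fin.snoc (fun l => if l = lastIdx m then bigVertex m else Pi.single l 1) 0

@[simp] lemma vertex_castSucc (l : Fin (2*m-1)) :
    vertex m l.castSucc = if l = lastIdx m then bigVertex m else Pi.single l 1 := by
  simp [vertex]

@[simp] lemma vertex_last : vertex m (Fin.last _) = 0 := by simp [vertex]

def coordForm (m : ℕ) [NeZero m] (l : Fin (2*m-1)) : Pt (2*m-1) × ℝ →ₗ[ℝ] ℝ where
  toFun p := m * p.1 l - (m - 1) * p.1 (lastIdx m)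
  map_add' p q := by simp only [Prod.fst_add, Pi.add_apply]; ring
  map_smul' c p := by simp only [Prod.smul_fst, Pi.smul_apply, smul_eq_mul, RingHom.id_apply]; ring

def zeroForm (m : ℕ) [NeZero m] : Pt (2*m-1) × ℝ →ₗ[ℝ] ℝ where
  toFun p := m * p.2 + (2*m - 1) * (m - 1) * p.1 (lastIdx m) - m * ∑ l, p.1 l
  map_add' p q := by
    simp only [Prod.fst_add, Prod.snd_add, Pi.add_apply, Finset.sum_add_distrib]; ring
  map_smul' c p := by
    simp only [Prod.smul_fst, Prod.smul_snd, Pi.smul_apply, smul_eq_mul, RingHom.id_apply,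
      ← Finset.mul_sum]
    ring

/-- `m` times the barycentric coordinates with respect to the lifted vertices `homog ∘ vertex m`. -/
def bary (m : ℕ) [NeZero m] : Fin (2*m-1+1) → Pt (2*m-1) × ℝ →ₗ[ℝ] ℝ :=
  Fin.snoc (α := fun _ => Pt (2*m-1) × ℝ →ₗ[ℝ] ℝ) (coordForm m) (zeroForm m)

lemma bary_castSucc (l : Fin (2*m-1)) (p : Pt (2*m-1) × ℝ) :
    bary m l.castSucc p = m * p.1 l - (m - 1) * p.1 (lastIdx m) := by
  simp [bary, coordForm]

lemma bary_last (p : Pt (2*m-1) × ℝ) :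
    bary m (Fin.last _) p = m * p.2 + (2*m - 1) * (m - 1) * p.1 (lastIdx m) - m * ∑ l, p.1 l := by
  simp [bary, zeroForm]

lemma bary_castSucc_lastIdx (p : Pt (2*m-1) × ℝ) :
    bary m (lastIdx m).castSucc p = p.1 (lastIdx m) := by
  rw [bary_castSucc]; ring

lemma bary_vertex (a b : Fin (2*m-1+1)) :
    bary m b (homog (vertex m a)) = if a = b then (m : ℝ) else 0 := by
  induction b using Fin.lastCases with
  | last =>
    induction a using Fin.lastCases with
    | last => simp [bary_last]
    | cast l =>
      by_cases hl : l = lastIdx m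
      · subst hl
        rw [vertex_castSucc, if_pos rfl, bary_last, if_neg (Fin.castSucc_ne_last _)]
        simp only [homog_fst, homog_snd, sum_bigVertex]
        rw [bigVertex_apply, if_pos rfl]
        ring
      · simp [bary_last, hl, Pi.single_apply]
  | cast l =>
    induction a using Fin.lastCases with
    | last => simp [bary_castSucc, (Fin.castSucc_ne_last l).symm]
    | cast l' =>
      by_cases hl : l' = lastIdx m
      · subst hl
        by_cases h : l = lastIdx m
        · subst h; simp [bary_castSucc, bigVertex_apply]; ring
        · simp [bary_castSucc, bigVertex_apply, h, Ne.symm h]; ring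
      · by_cases h : l = l'
        · subst h; simp [bary_castSucc, hl]
        · simp [bary_castSucc, hl, h, Ne.symm h]

lemma bary_sum_smul_homog_vertex (c : Fin (2*m-1+1) → ℝ) (b : Fin (2*m-1+1)) :
    bary m b (∑ a, c a • homog (vertex m a)) = m * c b := by
  simp [bary_vertex, mul_comm]

def diag (m : ℕ) (c : ℝ) : Pt (2*m-1) × ℝ := (fun _ => c, 2 * c)

lemma bary_diag (c : ℝ) (b : Fin (2*m-1+1)) : bary m b (diag m c) = c := by
  induction b using Fin.lastCases with
  | last => simp [bary_last, diag, cast_two_mul_sub_one]; ring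
  | cast l => simp [bary_castSucc, diag]; ring

lemma eq_of_bary_eq {p q : Pt (2*m-1) × ℝ} (h : ∀ b, bary m b p = bary m b q) : p = q := by
  have hm : (m : ℝ) ≠ 0 := cast_pos.ne'
  have hL : p.1 (lastIdx m) = q.1 (lastIdx m) := by
    simpa only [bary_castSucc_lastIdx] using h (lastIdx m).castSucc
  have h1 : p.1 = q.1 := funext fun l => by
    have := h l.castSucc
    rw [bary_castSucc, bary_castSucc, hL, sub_left_inj] at this
    exact mul_left_cancel₀ hm this
  have h2 : p.2 = q.2 := by
    have := h (Fin.last _)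
    rw [bary_last, bary_last, h1, sub_left_inj, add_left_inj] at this
    exact mul_left_cancel₀ hm this
  exact Prod.ext h1 h2

lemma diag_eq_sum_smul_homog_vertex (c : ℝ) :
    diag m c = ∑ a, (c / m) • homog (vertex m a) :=
  eq_of_bary_eq fun b => by
    rw [bary_diag, bary_sum_smul_homog_vertex, mul_div_cancel₀ _ cast_pos.ne']

lemma exists_bary_eq_add_mul {p : Pt (2*m-1) × ℝ} (hlat : IsLat p.1) (hdeg : ∃ z : ℤ, p.2 = z)
    (b : Fin (2*m-1+1)) : ∃ n : ℤ, bary m b p = p.1 (lastIdx m) + m * n := by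
  choose z hz using hlat
  obtain ⟨D, hD⟩ := hdeg
  induction b using Fin.lastCases with
  | last =>
    refine ⟨D + (2*m - 3) * z (lastIdx m) - ∑ l, z l, ?_⟩
    rw [bary_last, hD]
    simp only [hz]
    push_cast
    ring
  | cast l =>
    refine ⟨z l - z (lastIdx m), ?_⟩
    simp only [bary_castSucc, hz]
    push_cast
    ring

lemma exists_eq_diag_add_sum {p : Pt (2*m-1) × ℝ} (hlat : IsLat p.1) (hdeg : ∃ z : ℤ, p.2 = z)
    (hnonneg : ∀ b, 0 ≤ bary m b p) :
    ∃ j : ℕ, j < m ∧ ∃ N : Fin (2*m-1+1) → ℕ,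
      p = diag m j + ∑ a, (N a : ℝ) • homog (vertex m a) := by
  obtain ⟨t, ht⟩ := hlat (lastIdx m)
  choose n hn using exists_bary_eq_add_mul hlat hdeg
  have hm : (0 : ℤ) < m := by exact_mod_cast NeZero.pos m
  obtain ⟨j, hj⟩ := Int.eq_ofNat_of_zero_le (Int.emod_nonneg t hm.ne')
  have hjm : (j : ℤ) < m := hj ▸ Int.emod_lt_of_pos t hm
  obtain ⟨q, rfl⟩ : ∃ q : ℤ, t = j + m * q := ⟨t / m, by rw [← hj, Int.emod_add_mul_ediv]⟩
  have hN : ∀ b, ∃ N : ℕ, q + n b = N := fun b => by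
    refine Int.eq_ofNat_of_zero_le ?_
    have h := hnonneg b
    rw [hn b, ht] at h
    have h' : (0 : ℤ) ≤ j + m * (q + n b) := by
      have : (0 : ℝ) ≤ ((j + m * (q + n b) : ℤ) : ℝ) := by push_cast at h ⊢; linarith
      exact_mod_cast this
    nlinarith
  choose N hN using hN
  refine ⟨j, by exact_mod_cast hjm, N, eq_of_bary_eq fun b => ?_⟩
  rw [map_add, bary_diag, bary_sum_smul_homog_vertex, hn b, ht]
  have : ((j + m * q : ℤ) : ℝ) + m * n b = j + m * ((q + n b : ℤ) : ℝ) := by push_cast; ring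
  rw [this, hN b]
  push_cast
  ring

lemma range_vertex : Set.range (vertex m) = Vm m := by
  have hsingle : ∀ k : Fin (2*m-1),
      (Pi.single k 1 : Pt (2*m-1)) = fun l => if l = k then 1 else 0 :=
    fun k => funext fun l => Pi.single_apply k 1 l
  ext u
  simp only [Vm, Set.mem_union, Set.mem_singleton_iff, Set.mem_ofPred_eq, Set.mem_range]
  constructor
  · rintro ⟨a, rfl⟩
    induction a using Fin.lastCases with
    | last => exact Or.inl (Or.inl vertex_last)
    | cast l =>
      by_cases hl : l = lastIdx m
      · exact Or.inr (by rw [vertex_castSucc, if_pos hl]; rfl)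
      · exact Or.inl (Or.inr ⟨l, (val_lt_iff_ne_lastIdx l).2 hl, by simp [hl, hsingle]⟩)
  · rintro ((rfl | ⟨k, hk, rfl⟩) | rfl)
    · exact ⟨Fin.last _, vertex_last⟩
    · exact ⟨k.castSucc, by simp [(val_lt_iff_ne_lastIdx k).1 hk, hsingle]⟩
    · exact ⟨(lastIdx m).castSucc, by rw [vertex_castSucc, if_pos rfl]; rfl⟩

lemma Pm_eq_convexHull_range_vertex : Pm m = convexHull ℝ (Set.range (vertex m)) := by
  rw [range_vertex, Pm]

lemma isLat_vertex (a : Fin (2*m-1+1)) : IsLat (vertex m a) := by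
  induction a using Fin.lastCases with
  | last => exact fun _ => ⟨0, by simp⟩
  | cast l =>
    intro k
    by_cases hl : l = lastIdx m
    · by_cases hk : k = lastIdx m
      · exact ⟨m, by simp [hl, hk, bigVertex_apply]⟩
      · exact ⟨m - 1, by simp [hl, hk, bigVertex_apply]⟩
    · by_cases hk : k = l
      · exact ⟨1, by simp [hl, hk]⟩
      · exact ⟨0, by simp [hl, hk]⟩

lemma vertex_mem_latPts (a : Fin (2*m-1+1)) : vertex m a ∈ latPts (Pm m) :=
  ⟨(Pm_eq_convexHull_range_vertex (m := m)) ▸ subset_convexHull ℝ _ ⟨a, rfl⟩, isLat_vertex a⟩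

lemma bary_nonneg_of_mem_coneLat {p : Pt (2*m-1) × ℝ} (hp : p ∈ coneLat (Pm m))
    (b : Fin (2*m-1+1)) : 0 ≤ bary m b p := by
  rw [Pm_eq_convexHull_range_vertex] at hp
  refine nonneg_of_mem_coneLat_convexHull (bary m b) ?_ hp
  rintro _ ⟨a, rfl⟩
  rw [bary_vertex]
  split_ifs <;> simp

def hilbGen (m : ℕ) [NeZero m] : Set (Pt (2*m-1) × ℝ) :=
  insert (diag m 1) (Set.range fun a => homog (vertex m a))

lemma hilbGen_finite : (hilbGen m).Finite :=
  (Set.finite_range _).insert _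

lemma diag_mem_coneLat (j : ℕ) : diag m j ∈ coneLat (Pm m) :=
  mem_coneLat_of_eq_sum
    (fun a => ⟨div_nonneg (Nat.cast_nonneg j) cast_pos.le, (vertex_mem_latPts a).1⟩)
    (diag_eq_sum_smul_homog_vertex _) (fun _ => ⟨j, rfl⟩) ⟨2 * j, by simp [diag]⟩

lemma hilbGen_subset_coneLat : hilbGen m ⊆ coneLat (Pm m) := by
  rintro _ (rfl | ⟨a, rfl⟩)
  · exact_mod_cast diag_mem_coneLat 1
  · exact homog_mem_coneLat (vertex_mem_latPts a)

lemma coneLat_subset_closure_hilbGen :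
    coneLat (Pm m) ⊆ AddSubmonoid.closure (hilbGen m) := by
  intro p hp
  obtain ⟨j, -, N, rfl⟩ := exists_eq_diag_add_sum hp.2.1 hp.2.2 (bary_nonneg_of_mem_coneLat hp)
  have hdiag : diag m j = j • diag m 1 := by ext <;> simp [diag, mul_comm]
  refine add_mem ?_ (sum_mem fun a _ => ?_)
  · rw [hdiag]
    exact nsmul_mem (AddSubmonoid.subset_closure (Set.mem_insert _ _)) j
  · rw [Nat.cast_smul_eq_nsmul]
    exact nsmul_mem (AddSubmonoid.subset_closure (Set.mem_insert_of_mem _ (Set.mem_range_self a))) _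

/-- `homog x` has degree one and lies in the monoid generated by `hilbGen m`, whose only elements
of degree one are the lifted vertices. -/
lemma latPts_subset_range_vertex : latPts (Pm m) ⊆ Set.range (vertex m) := by
  intro _ hx
  have hdeg : ∀ s ∈ hilbGen m, 1 ≤ s.2 := by
    rintro _ (rfl | ⟨a, rfl⟩) <;> norm_num [diag]
  rcases mem_of_mem_closure_of_snd_eq_one hdeg
    (coneLat_subset_closure_hilbGen (homog_mem_coneLat hx)) rfl with h | ⟨a, ha⟩
  · have := congrArg Prod.snd h
    norm_num [diag] at this
  · exact ⟨a, congrArg Prod.fst ha⟩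

lemma emptySimplexIn_vertex : EmptySimplexIn (Pm m) (2*m-1) (vertex m) :=
  ⟨vertex_mem_latPts, affineIndependent_of_dual (bary m) cast_pos.ne' bary_vertex,
    fun _ hx hlat => latPts_subset_range_vertex
      ⟨(Pm_eq_convexHull_range_vertex (m := m)) ▸ hx, hlat⟩⟩

lemma boxSimplex_vertex : boxSimplex (vertex m) = {p | ∃ j : ℕ, j < m ∧ p = diag m j} := by
  ext p
  constructor
  · rintro ⟨r, hr, h1, h2, hlat, hdeg⟩
    have hbary : ∀ b, bary m b p = m * r b := fun b => by
      rw [show p = ∑ a, r a • homog (vertex m a) by rw [sum_smul_homog, ← h1, ← h2],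
        bary_sum_smul_homog_vertex]
    obtain ⟨j, hj, N, hpN⟩ := exists_eq_diag_add_sum hlat hdeg fun b => by
      rw [hbary]; exact mul_nonneg cast_pos.le (hr b).1
    have hN : ∀ b, N b = 0 := fun b => by
      have h := hbary b
      rw [hpN, map_add, bary_diag, bary_sum_smul_homog_vertex] at h
      have : (N b : ℝ) < 1 := by
        nlinarith [(hr b).2, cast_pos (m := m), (j.cast_nonneg : (0 : ℝ) ≤ j)]
      exact Nat.lt_one_iff.1 (by exact_mod_cast this)
    exact ⟨j, hj, by simpa [hN] using hpN⟩
  · rintro ⟨j, hj, rfl⟩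
    have hsum := diag_eq_sum_smul_homog_vertex (m := m) j
    rw [sum_smul_homog] at hsum
    refine ⟨fun _ => j / m, fun _ => ⟨by positivity, ?_⟩, congrArg Prod.fst hsum,
      congrArg Prod.snd hsum, fun _ => ⟨j, rfl⟩, ⟨2 * j, by simp [diag]⟩⟩
    rw [div_lt_one cast_pos]
    exact_mod_cast hj

lemma iUnion_boxSimplex_eq_boxSimplex_vertex :
    (⋃ v ∈ {v : Fin (2*m-1+1) → Pt (2*m-1) | EmptySimplexIn (Pm m) (2*m-1) v}, boxSimplex v) =
      boxSimplex (vertex m) := by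
  refine subset_antisymm (Set.iUnion₂_subset fun v hv => ?_)
    (Set.subset_biUnion_of_mem (u := boxSimplex) emptySimplexIn_vertex)
  refine (boxSimplex_eq_of_range_subset hv.2.1.injective
    emptySimplexIn_vertex.2.1.injective ?_).subset
  rintro _ ⟨i, rfl⟩
  exact latPts_subset_range_vertex (hv.1 i)

lemma exists_lastIdx_eq_mul_of_mem_closure {p : Pt (2*m-1) × ℝ}
    (hp : p ∈ AddSubmonoid.closure (Set.range fun a => homog (vertex m a))) :
    ∃ n : ℕ, p.1 (lastIdx m) = n * m := by
  induction hp using AddSubmonoid.closure_induction with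
  | mem _ h =>
    obtain ⟨a, rfl⟩ := h
    have := bary_vertex a (lastIdx m).castSucc
    rw [bary_castSucc_lastIdx] at this
    exact ⟨if a = (lastIdx m).castSucc then 1 else 0, by rw [this]; split_ifs <;> simp⟩
  | zero => exact ⟨0, by simp⟩
  | add x y _ _ hx hy =>
    obtain ⟨a, ha⟩ := hx
    obtain ⟨b, hb⟩ := hy
    exact ⟨a + b, by simp [ha, hb, add_mul]⟩

lemma diag_notMem_closure {j : ℕ} (hj : 1 ≤ j) (hjm : j < m) :
    diag m j ∉ AddSubmonoid.closure (Set.range fun a => homog (vertex m a)) := by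
  intro h
  obtain ⟨n, hn⟩ := exists_lastIdx_eq_mul_of_mem_closure h
  have hn' : (j : ℝ) = n * m := hn
  have hn' : j = n * m := by exact_mod_cast hn'
  rcases n with _ | n
  · omega
  · nlinarith

lemma diag_notMem_genMonoid {j : ℕ} (hj : 1 ≤ j) (hjm : j < m) : diag m j ∉ genMonoid (Pm m) := by
  refine fun h => diag_notMem_closure hj hjm (AddSubmonoid.closure_mono ?_
    (genMonoid_subset_closure _ h))
  rintro _ ⟨x, hx, rfl⟩
  obtain ⟨a, rfl⟩ := latPts_subset_range_vertex hx
  exact ⟨a, rfl⟩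

lemma boxP_eq : boxP (Pm m) (2*m-1) = {p | ∃ j : ℕ, 1 ≤ j ∧ j ≤ m - 1 ∧ p = diag m j} := by
  ext p
  rw [boxP, iUnion_boxSimplex_eq_boxSimplex_vertex, boxSimplex_vertex]
  constructor
  · rintro ⟨⟨j, hj, rfl⟩, hgen⟩
    refine ⟨j, Nat.one_le_iff_ne_zero.2 ?_, by omega, rfl⟩
    rintro rfl
    exact hgen ⟨0, Fin.elim0, fun i => i.elim0, by ext; simp [diag], by simp [diag]⟩
  · rintro ⟨j, hj, hjm, rfl⟩
    exact ⟨⟨j, by omega, rfl⟩, diag_notMem_genMonoid hj (by omega)⟩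

lemma subset_hilbGen_of_isMinHilbertBasis {H : Set (Pt (2*m-1) × ℝ)}
    (hH : IsMinHilbertBasis (Pm m) H) (hm : 2 ≤ m) : H ⊆ hilbGen m ∧ diag m 1 ∈ H := by
  obtain ⟨⟨-, -, hgen⟩, hmin⟩ := hH
  have hHG := hmin _ ⟨hilbGen_finite, hilbGen_subset_coneLat, coneLat_subset_closure_hilbGen⟩
  refine ⟨hHG, by_contra fun hdiag => ?_⟩
  have hsub : H ⊆ Set.range fun a => homog (vertex m a) := fun p hp =>
    (hHG hp).resolve_left fun h => hdiag (h ▸ hp)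
  exact diag_notMem_closure (j := 1) le_rfl (by omega)
    (AddSubmonoid.closure_mono hsub (hgen (by exact_mod_cast diag_mem_coneLat 1)))

lemma isGreatest_deg_boxP (hm : 2 ≤ m) :
    IsGreatest {t : ℝ | ∃ p ∈ boxP (Pm m) (2*m-1), p.2 = t} (2*m - 2) := by
  rw [boxP_eq]
  refine ⟨⟨diag m (m - 1 : ℕ), ⟨m - 1, by omega, le_rfl, rfl⟩, ?_⟩, ?_⟩
  · simp [diag, Nat.cast_sub (by omega : 1 ≤ m)]
    ring
  · rintro _ ⟨_, ⟨j, -, hj, rfl⟩, rfl⟩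
    have hj' : (j : ℝ) ≤ m - 1 := by
      rw [← Nat.cast_one, ← Nat.cast_sub (by omega)]
      exact_mod_cast hj
    simp only [diag]
    linarith

lemma diag_one (m : ℕ) : diag m 1 = (fun _ => 1, 2) := by
  simp [diag]

lemma deg_of_isMinHilbertBasis {H : Set (Pt (2*m-1) × ℝ)} (hH : IsMinHilbertBasis (Pm m) H)
    (hm : 2 ≤ m) :
    {p ∈ H | 2 ≤ p.2} = {diag m 1} ∧ IsGreatest {t : ℝ | ∃ p ∈ H, p.2 = t} 2 := by
  obtain ⟨hHG, hdiag⟩ := subset_hilbGen_of_isMinHilbertBasis hH hm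
  have hdeg : ∀ p ∈ H, p = diag m 1 ∨ p.2 = 1 := fun p hp =>
    (hHG hp).imp_right fun ⟨a, ha⟩ => ha ▸ rfl
  have hdiag2 : (diag m 1).2 = 2 := by simp [diag]
  refine ⟨Set.eq_singleton_iff_unique_mem.2 ⟨⟨hdiag, hdiag2.ge⟩, fun p ⟨hp, h2⟩ => ?_⟩,
    ⟨⟨_, hdiag, hdiag2⟩, ?_⟩⟩
  · exact (hdeg p hp).resolve_right fun h1 => by linarith
  · rintro _ ⟨p, hp, rfl⟩
    rcases hdeg p hp with rfl | h1
    · exact hdiag2.le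
    · linarith

end Pm

/-- for `d = 2m-1`, `m ≥ 4`, the holes of `P` are exactly the points
`(j,…,j,2j)`, `1 ≤ j ≤ m-1` (so `μ_hole(P) = 2m-2 = d-1`), while the only minimal
Hilbert basis element of degree `≥ 2` is `(1,…,1,2)` (so `μ_Hilb(P) = 2`). -/
theorem box_and_hilb_of_Pm (m : ℕ) (hm : 4 ≤ m) :
    boxP (Pm m) (2*m-1) =
      {p : Pt (2*m-1) × ℝ | ∃ j : ℕ, 1 ≤ j ∧ j ≤ m - 1 ∧
        p = (fun _ => (j : ℝ), (2*j : ℝ))} ∧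
    IsGreatest {t : ℝ | ∃ p ∈ boxP (Pm m) (2*m-1), p.2 = t} ((2*m : ℝ) - 2) ∧
    ((2*m : ℝ) - 2 = ((2*m-1 : ℕ) : ℝ) - 1) ∧
    (∀ H, IsMinHilbertBasis (Pm m) H →
      {p ∈ H | 2 ≤ p.2} = {((fun _ => (1:ℝ)), (2:ℝ))} ∧
      IsGreatest {t : ℝ | ∃ p ∈ H, p.2 = t} 2) := by
  have : NeZero m := ⟨by omega⟩
  refine ⟨Pm.boxP_eq, Pm.isGreatest_deg_boxP (by omega), ?_, fun H hH => ?_⟩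
  · rw [Pm.cast_two_mul_sub_one]
    ring
  · rw [← Pm.diag_one m]
    exact Pm.deg_of_isMinHilbertBasis hH (by omega)
end
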